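/- Fix a positive integer T and a ground-truth vector g ∈ ℝ^T, and let Φ ∈ ℂ^{T×T} be the discrete Fourier matrix. Let V be a (possibly infinite) index set of nodes, each node v equipped with vectors d_{v,1}, d_{v,2} ∈ ℝ^T and label y_v = ⟨g, d_{v,1}⟩. Assume the frequency bandwidths of invariant and variant patterns never overlap: for all nodes u, v and every index i, (conj(Φ d_{u,1}) ⊙ Φ d_{u,1})_i · (conj(Φ d_{v,2}) ⊙ Φ d_{v,2})_i = 0. Define the spectral mask m ∈ ℂ^T by m_i = 0 if there exists a node v with (conj(Φ d_{v,2}) ⊙ Φ d_{v,2})_i ≠ 0, and m_i = 1 otherwise, and set w = Φ g ∈ ℂ^T. Then the spectral classifier predicts perfectly on every node: for every v, w^H ( m ⊙ Φ(d_{v,1} + d_{v,2}) ) = ⟨g, d_{v,1}⟩ = y_v. Consequently w minimizes the empirical risk on any training subset of V, and for every ε > 0, every node v ∈ V has squared error (ŷ_v − y_v)² = 0 < ε, no matter how large ‖d_{v,2}‖₂ is. -/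

import Mathlib

/-- The discrete Fourier matrix `Φ ∈ ℂ^{T×T}`, `Φ k t = (1/√T) · exp(-2πi·k·t/T)`. -/
noncomputable def dft (T : ℕ) : Matrix (Fin T) (Fin T) ℂ :=
  fun k t => ((1 / Real.sqrt T : ℝ) : ℂ) *
    Complex.exp (-(2 * (Real.pi : ℂ) * Complex.I * ((k : ℕ) : ℂ) * ((t : ℕ) : ℂ)) / (T : ℂ))

/-- The spectrum of a real vector `d ∈ ℝ^T`: `Φ d`, viewing `d` as a complex vector. -/
noncomputable def spec (T : ℕ) (d : Fin T → ℝ) : Fin T → ℂ :=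
  (dft T).mulVec fun t => (d t : ℂ)

/-- The spectral prediction `ŷ = wᴴ (m ⊙ z)` for a classifier `w`, mask `m`, and
spectrum `z` in `ℂ^T`. -/
noncomputable def specPred (T : ℕ) (w m z : Fin T → ℂ) : ℂ :=
  ∑ i, (starRingEnd ℂ) (w i) * (m i * z i)

/-! The DFT matrix is unitary: the `(t, s)` entry of `Φᴴ Φ` is `1 / T` times a geometric sum of
the `T`-th root of unity `μ ^ t / μ ^ s`, `μ = exp (2πi / T)`, which vanishes unless `t = s`.
Hence `⟨Φ g, Φ d⟩ = ⟨g, d⟩`. Since the invariant and variant spectra have disjoint supports, the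
mask is `0` wherever `Φ d₂` is nonzero and `1` wherever `Φ d₁` is nonzero, so
`m ⊙ Φ (d₁ + d₂) = Φ d₁` and the prediction is `⟨Φ g, Φ d₁⟩ = ⟨g, d₁⟩`, with zero error. -/

open Matrix Complex Real

lemma star_mulVec_dotProduct_mulVec {n R : Type*} [Fintype n] [DecidableEq n] [CommSemiring R]
    [StarRing R] {A : Matrix n n R} (hA : Aᴴ * A = 1) (x y : n → R) :
    star (A *ᵥ x) ⬝ᵥ (A *ᵥ y) = star x ⬝ᵥ y := by
  rw [star_mulVec, dotProduct_mulVec, vecMul_vecMul, hA, vecMul_one]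

lemma star_dft_mul_dft (T : ℕ) (k t s : Fin T) :
    star (dft T k t) * dft T k s
      = (cexp (2 * π * I / T) ^ (t : ℕ) / cexp (2 * π * I / T) ^ (s : ℕ)) ^ (k : ℕ) / T := by
  have hsqrt : ((1 / √T : ℝ) : ℂ) * ((1 / √T : ℝ) : ℂ) = 1 / T := by
    rw [← ofReal_mul, one_div_mul_one_div, Real.mul_self_sqrt (Nat.cast_nonneg T)]
    push_cast; rfl
  simp only [dft, star_mul', Complex.star_def, conj_ofReal, ← Complex.exp_conj, map_div₀, map_neg,
    map_mul, conj_I, map_natCast, map_ofNat, ← Complex.exp_nat_mul, ← Complex.exp_sub]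
  rw [mul_mul_mul_comm, hsqrt, ← Complex.exp_add, div_mul_eq_mul_div, one_mul]
  ring_nf

lemma dft_conjTranspose_mul_self (T : ℕ) : (dft T)ᴴ * dft T = 1 := by
  ext t s
  set μ := cexp (2 * π * I / T)
  have hT : T ≠ 0 := t.pos.ne'
  have hμ : IsPrimitiveRoot μ T := isPrimitiveRoot_exp T hT
  rw [mul_apply]
  simp only [conjTranspose_apply, star_dft_mul_dft, ← Finset.sum_div]
  rw [Fin.sum_univ_eq_sum_range (fun k => (μ ^ (t : ℕ) / μ ^ (s : ℕ)) ^ k)]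
  by_cases hts : t = s
  · subst hts
    simp [hμ.ne_zero hT, hT]
  · have hr1 : μ ^ (t : ℕ) / μ ^ (s : ℕ) ≠ 1 := fun h =>
      hts (Fin.ext (hμ.pow_inj t.2 s.2 ((div_eq_one_iff_eq (pow_ne_zero _ (hμ.ne_zero hT))).mp h)))
    have hrT : (μ ^ (t : ℕ) / μ ^ (s : ℕ)) ^ T = 1 := by
      rw [div_pow, ← pow_mul, ← pow_mul, mul_comm, pow_mul, mul_comm, pow_mul, hμ.pow_eq_one,
        one_pow, one_pow, div_one]
    rw [geom_sum_eq hr1, hrT, sub_self, zero_div, zero_div, one_apply_ne hts]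

lemma spec_add (T : ℕ) (d e : Fin T → ℝ) :
    spec T (fun t => d t + e t) = spec T d + spec T e := by
  simp only [spec, ofReal_add, ← mulVec_add]
  rfl

lemma star_spec_dotProduct_spec (T : ℕ) (g d : Fin T → ℝ) :
    star (spec T g) ⬝ᵥ spec T d = ((∑ t, g t * d t : ℝ) : ℂ) := by
  rw [spec, spec, star_mulVec_dotProduct_mulVec (dft_conjTranspose_mul_self T)]
  simp [dotProduct]

lemma specPred_eq_star_dotProduct (T : ℕ) (w m z : Fin T → ℂ) :
    specPred T w m z = star w ⬝ᵥ (m * z) :=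
  rfl

lemma mask_mul_add_eq_left {V ι R : Type*} [NonAssocSemiring R] {a b : V → ι → R} {m : ι → R}
    (hdisj : ∀ u v i, a u i = 0 ∨ b v i = 0)
    (hm0 : ∀ i, (∃ v, b v i ≠ 0) → m i = 0) (hm1 : ∀ i, ¬ (∃ v, b v i ≠ 0) → m i = 1) (v : V) :
    m * (a v + b v) = a v := by
  funext i
  by_cases hi : ∃ v', b v' i ≠ 0
  · obtain ⟨v', hv'⟩ := hi
    simp [hm0 i ⟨v', hv'⟩, (hdisj v v' i).resolve_right hv']
  · have hb : b v i = 0 := not_not.mp fun h => hi ⟨v, h⟩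
    simp [hm1 i hi, hb]

theorem stmt4_general (T : ℕ) (g : Fin T → ℝ)
    (V : Type*) (d1 d2 : V → (Fin T → ℝ))
    (hno : ∀ u v : V, ∀ i : Fin T,
      ((starRingEnd ℂ) (spec T (d1 u) i) * spec T (d1 u) i) *
        ((starRingEnd ℂ) (spec T (d2 v) i) * spec T (d2 v) i) = 0)
    (m : Fin T → ℂ)
    (hm0 : ∀ i : Fin T,
      (∃ v : V, (starRingEnd ℂ) (spec T (d2 v) i) * spec T (d2 v) i ≠ 0) → m i = 0)
    (hm1 : ∀ i : Fin T,
      ¬ (∃ v : V, (starRingEnd ℂ) (spec T (d2 v) i) * spec T (d2 v) i ≠ 0) → m i = 1)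
    (w : Fin T → ℂ) (hw : w = (dft T).mulVec fun t => (g t : ℂ)) :
    (∀ v : V,
      specPred T w m (spec T (fun t => d1 v t + d2 v t)) = ((∑ t, g t * d1 v t : ℝ) : ℂ)) ∧
    (∀ D : Finset V, ∀ w' : Fin T → ℂ,
      (1 / (D.card : ℝ)) * ∑ v ∈ D,
          ‖specPred T w m (spec T (fun t => d1 v t + d2 v t))
            - ((∑ t, g t * d1 v t : ℝ) : ℂ)‖ ^ 2
        ≤ (1 / (D.card : ℝ)) * ∑ v ∈ D,
            ‖specPred T w' m (spec T (fun t => d1 v t + d2 v t))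
              - ((∑ t, g t * d1 v t : ℝ) : ℂ)‖ ^ 2) ∧
    (∀ ε : ℝ, 0 < ε → ∀ v : V,
      ‖specPred T w m (spec T (fun t => d1 v t + d2 v t))
        - ((∑ t, g t * d1 v t : ℝ) : ℂ)‖ ^ 2 = 0 ∧
      ‖specPred T w m (spec T (fun t => d1 v t + d2 v t))
        - ((∑ t, g t * d1 v t : ℝ) : ℂ)‖ ^ 2 < ε) := by
  -- `conj z * z = ‖z‖ ^ 2` vanishes iff `z` does, so the hypotheses are about supports.
  have hmask := mask_mul_add_eq_left (a := fun v => spec T (d1 v)) (b := fun v => spec T (d2 v))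
    (by simpa using hno) (by simpa using hm0) (by simpa using hm1)
  have hexact : ∀ v, specPred T w m (spec T (fun t => d1 v t + d2 v t))
      = ((∑ t, g t * d1 v t : ℝ) : ℂ) := by
    intro v
    rw [specPred_eq_star_dotProduct, spec_add, hmask v, hw]
    exact star_spec_dotProduct_spec T g (d1 v)
  have herr : ∀ v, ‖specPred T w m (spec T (fun t => d1 v t + d2 v t))
      - ((∑ t, g t * d1 v t : ℝ) : ℂ)‖ ^ 2 = 0 :=
    fun v => by rw [hexact v, sub_self, norm_zero, sq, mul_zero]
  refine ⟨hexact, fun D w' => ?_, fun ε hε v => ⟨herr v, (herr v).trans_lt hε⟩⟩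
  rw [Finset.sum_congr rfl fun v _ => herr v, Finset.sum_const_zero, mul_zero]
  positivity

/-- Proposition 2 (SILD): if the frequency bandwidths of invariant and variant patterns
never overlap, then with the spectral mask `m` (zero exactly on frequencies where some
variant spectrum is supported, one elsewhere) and the spectral classifier `w = Φ g`,
the prediction is exact on every node; consequently `w` minimizes the empirical risk on
any training subset, and every node has zero squared error (`< ε` for every `ε > 0`),
no matter how large `‖d_{v,2}‖` is. -/
theorem stmt4 (T : ℕ) (hT : 0 < T) (g : Fin T → ℝ)
    (V : Type*) (d1 d2 : V → (Fin T → ℝ))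
    (hno : ∀ u v : V, ∀ i : Fin T,
      ((starRingEnd ℂ) (spec T (d1 u) i) * spec T (d1 u) i) *
        ((starRingEnd ℂ) (spec T (d2 v) i) * spec T (d2 v) i) = 0)
    (m : Fin T → ℂ)
    (hm0 : ∀ i : Fin T,
      (∃ v : V, (starRingEnd ℂ) (spec T (d2 v) i) * spec T (d2 v) i ≠ 0) → m i = 0)
    (hm1 : ∀ i : Fin T,
      ¬ (∃ v : V, (starRingEnd ℂ) (spec T (d2 v) i) * spec T (d2 v) i ≠ 0) → m i = 1)
    (w : Fin T → ℂ) (hw : w = (dft T).mulVec fun t => (g t : ℂ)) :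
    (∀ v : V,
      specPred T w m (spec T (fun t => d1 v t + d2 v t)) = ((∑ t, g t * d1 v t : ℝ) : ℂ)) ∧
    (∀ D : Finset V, ∀ w' : Fin T → ℂ,
      (1 / (D.card : ℝ)) * ∑ v ∈ D,
          ‖specPred T w m (spec T (fun t => d1 v t + d2 v t))
            - ((∑ t, g t * d1 v t : ℝ) : ℂ)‖ ^ 2
        ≤ (1 / (D.card : ℝ)) * ∑ v ∈ D,
            ‖specPred T w' m (spec T (fun t => d1 v t + d2 v t))
              - ((∑ t, g t * d1 v t : ℝ) : ℂ)‖ ^ 2) ∧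
    (∀ ε : ℝ, 0 < ε → ∀ v : V,
      ‖specPred T w m (spec T (fun t => d1 v t + d2 v t))
        - ((∑ t, g t * d1 v t : ℝ) : ℂ)‖ ^ 2 = 0 ∧
      ‖specPred T w m (spec T (fun t => d1 v t + d2 v t))
        - ((∑ t, g t * d1 v t : ℝ) : ℂ)‖ ^ 2 < ε) :=
  stmt4_general T g V d1 d2 hno m hm0 hm1 w hw
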